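/- arXiv:2208.14960 — 5 statements merged into one kernel-verified Lean document; each statement's English description precedes it below -/
import Mathlib

section
/- Let G be a group, let Λ be a countable index set, and for each λ ∈ Λ let π_λ be a unitary representation of G on a finite-dimensional complex inner product space V_λ of dimension d_λ, and let a_λ ≥ 0 be real numbers with ∑_{λ∈Λ} d_λ · a_λ < ∞. Then for all g₁, g₂ ∈ G the series k(g₁, g₂) := ∑_{λ∈Λ} a_λ · Re(tr(π_λ(g₂⁻¹ · g₁))) converges absolutely; the resulting kernel k is bi-invariant, i.e. k(h₁ · g₁ · h₂⁻¹, h₁ · g₂ · h₂⁻¹) = k(g₁, g₂) for all h₁, h₂, g₁, g₂ ∈ G; and k is a positive semidefinite kernel on G. (This is the sufficiency direction of the paper's Theorem 1 on stationary kernels on compact Lie groups.) -/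
/-!
A unitary operator on a space of dimension `d` has trace of modulus at most `d`, so the series
is dominated by `∑ d_λ a_λ`, and the trace is invariant under conjugation, which gives
bi-invariance. Unitarity means `π(g₂⁻¹ g₁) = π(g₂)† π(g₁)`, so
`∑ᵢⱼ cᵢ cⱼ tr π(xⱼ⁻¹ xᵢ) = tr (B† B) ≥ 0` for `B = ∑ᵢ cᵢ π(xᵢ)`; positive semidefiniteness
survives nonnegative weights and convergent sums.
-/

/-- A kernel `k : X × X → ℝ` is positive semidefinite if for every `n`, all
`x₁, …, xₙ ∈ X` and all real `c₁, …, cₙ`, `∑ᵢⱼ cᵢ cⱼ k(xᵢ, xⱼ) ≥ 0`. -/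
def IsPSDKernel {X : Type*} (k : X → X → ℝ) : Prop :=
  ∀ (n : ℕ) (x : Fin n → X) (c : Fin n → ℝ),
    0 ≤ ∑ i : Fin n, ∑ j : Fin n, c i * c j * k (x i) (x j)

open scoped InnerProductSpace

namespace IsPSDKernel

variable {X : Type*}

lemma const_mul {k : X → X → ℝ} (hk : IsPSDKernel k) {a : ℝ} (ha : 0 ≤ a) :
    IsPSDKernel fun x y => a * k x y := by
  intro n x c
  have hfactor : ∑ i, ∑ j, c i * c j * (a * k (x i) (x j)) =
      a * ∑ i, ∑ j, c i * c j * k (x i) (x j) := by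
    simp only [Finset.mul_sum]
    exact Finset.sum_congr rfl fun i _ => Finset.sum_congr rfl fun j _ => by ring
  rw [hfactor]
  exact mul_nonneg ha (hk n x c)

lemma tsum {ι : Type*} {k : ι → X → X → ℝ} (hk : ∀ l, IsPSDKernel (k l))
    (hs : ∀ x y, Summable fun l => k l x y) :
    IsPSDKernel fun x y => ∑' l, k l x y := by
  intro n x c
  have hterm : ∀ i j, Summable fun l => c i * c j * k l (x i) (x j) :=
    fun i j => (hs _ _).mul_left _
  calc 0 ≤ ∑' l, ∑ i, ∑ j, c i * c j * k l (x i) (x j) := tsum_nonneg fun l => hk l n x c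
    _ = ∑ i, ∑ j, c i * c j * ∑' l, k l (x i) (x j) := by
      rw [Summable.tsum_finsetSum fun i _ => summable_sum fun j _ => hterm i j]
      refine Finset.sum_congr rfl fun i _ => ?_
      rw [Summable.tsum_finsetSum fun j _ => hterm i j]
      exact Finset.sum_congr rfl fun j _ => tsum_mul_left

end IsPSDKernel

namespace LinearMap

variable {𝕜 E : Type*} [RCLike 𝕜] [NormedAddCommGroup E] [InnerProductSpace 𝕜 E]
  [FiniteDimensional 𝕜 E]

lemma norm_trace_le_finrank {T : E →ₗ[𝕜] E} (hT : ∀ v, ‖T v‖ ≤ ‖v‖) :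
    ‖trace 𝕜 E T‖ ≤ Module.finrank 𝕜 E := by
  set b := stdOrthonormalBasis 𝕜 E
  calc ‖trace 𝕜 E T‖ = ‖∑ i, ⟪b i, T (b i)⟫_𝕜‖ := by rw [trace_eq_sum_inner T b]
    _ ≤ ∑ i, ‖⟪b i, T (b i)⟫_𝕜‖ := norm_sum_le _ _
    _ ≤ ∑ _i : Fin (Module.finrank 𝕜 E), (1 : ℝ) := by
      refine Finset.sum_le_sum fun i _ => (norm_inner_le_norm _ _).trans ?_
      rw [b.orthonormal.1 i, one_mul]
      exact (hT _).trans (b.orthonormal.1 i).le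
    _ = Module.finrank 𝕜 E := by simp

lemma sum_mul_re_trace_adjoint_mul_nonneg {ι : Type*} [Fintype ι] (A : ι → E →ₗ[𝕜] E)
    (c : ι → ℝ) :
    0 ≤ ∑ i, ∑ j, c i * c j * RCLike.re (trace 𝕜 E (adjoint (A j) * A i)) := by
  set B := ∑ i, (c i : 𝕜) • A i
  have hgram : adjoint B * B = ∑ j, ∑ i, ((c j * c i : ℝ) : 𝕜) • (adjoint (A j) * A i) := by
    simp only [B, map_sum, map_smulₛₗ, RCLike.conj_ofReal, Finset.sum_mul_sum,
      smul_mul_smul, RCLike.ofReal_mul]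
  have hpos : 0 ≤ RCLike.re (trace 𝕜 E (adjoint B * B)) :=
    (RCLike.nonneg_iff.1 (isPositive_adjoint_comp_self B).trace_nonneg).1
  rw [hgram, Finset.sum_comm] at hpos
  simpa only [map_sum, map_smul, smul_eq_mul, RCLike.re_ofReal_mul, mul_comm (c _) (c _)]
    using hpos

lemma trace_map_conj {R M G : Type*} [CommSemiring R] [AddCommMonoid M] [Module R M] [Group G]
    (ρ : G →* Module.End R M) (h g : G) :
    trace R M (ρ (h * g * h⁻¹)) = trace R M (ρ g) := by
  rw [map_mul ρ, map_mul ρ, trace_mul_cycle, ← map_mul ρ, inv_mul_cancel, map_one, one_mul]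

end LinearMap

section UnitaryRepresentation

variable {G E : Type*} [Group G] [NormedAddCommGroup E] [InnerProductSpace ℂ E]
  {π : G →* Module.End ℂ E}
  (hπ : ∀ g u v, ⟪π g u, π g v⟫_ℂ = ⟪u, v⟫_ℂ)
include hπ

lemma norm_map_apply (g : G) (v : E) : ‖π g v‖ = ‖v‖ := by
  rw [norm_eq_sqrt_re_inner (𝕜 := ℂ), norm_eq_sqrt_re_inner (𝕜 := ℂ) v, hπ]

variable [FiniteDimensional ℂ E]

lemma map_inv_eq_adjoint (g : G) : π g⁻¹ = LinearMap.adjoint (π g) :=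
  (LinearMap.eq_adjoint_iff _ _).2 fun u v => by
    rw [← hπ g, ← Module.End.mul_apply, ← map_mul, mul_inv_cancel, map_one, Module.End.one_apply]

lemma abs_re_trace_le_finrank (g : G) :
    |(LinearMap.trace ℂ E (π g)).re| ≤ Module.finrank ℂ E :=
  (Complex.abs_re_le_norm _).trans
    (LinearMap.norm_trace_le_finrank fun v => (norm_map_apply hπ g v).le)

lemma isPSDKernel_re_trace :
    IsPSDKernel fun g₁ g₂ => (LinearMap.trace ℂ E (π (g₂⁻¹ * g₁))).re := by
  intro n x c
  simpa only [map_mul, map_inv_eq_adjoint hπ, RCLike.re_to_complex] using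
    LinearMap.sum_mul_re_trace_adjoint_mul_nonneg (fun i => π (x i)) c

end UnitaryRepresentation

theorem stationary_kernel_on_group_general {G : Type*} [Group G]
    {Λ : Type*}
    (V : Λ → Type*) [∀ l, NormedAddCommGroup (V l)] [∀ l, InnerProductSpace ℂ (V l)]
    [∀ l, FiniteDimensional ℂ (V l)]
    (π : ∀ l, G →* (V l →ₗ[ℂ] V l))
    (hunit : ∀ (l : Λ) (g : G) (u v : V l),
      (@inner ℂ (V l) _ (π l g u) (π l g v)) = @inner ℂ (V l) _ u v)
    (a : Λ → ℝ) (ha : ∀ l, 0 ≤ a l)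
    (hsum : Summable fun l => (Module.finrank ℂ (V l) : ℝ) * a l) :
    (∀ g₁ g₂ : G,
      Summable fun l => |a l * (LinearMap.trace ℂ (V l) (π l (g₂⁻¹ * g₁))).re|) ∧
    (∀ h₁ h₂ g₁ g₂ : G,
      (∑' l, a l * (LinearMap.trace ℂ (V l)
          (π l ((h₁ * g₂ * h₂⁻¹)⁻¹ * (h₁ * g₁ * h₂⁻¹)))).re) =
        ∑' l, a l * (LinearMap.trace ℂ (V l) (π l (g₂⁻¹ * g₁))).re) ∧
    IsPSDKernel (fun g₁ g₂ : G =>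
      ∑' l, a l * (LinearMap.trace ℂ (V l) (π l (g₂⁻¹ * g₁))).re) := by
  have habs : ∀ g, Summable fun l => |a l * (LinearMap.trace ℂ (V l) (π l g)).re| := fun g =>
    hsum.of_nonneg_of_le (fun _ => abs_nonneg _) fun l => by
      rw [abs_mul, abs_of_nonneg (ha l), mul_comm]
      exact mul_le_mul_of_nonneg_right (abs_re_trace_le_finrank (hunit l) g) (ha l)
  refine ⟨fun g₁ g₂ => habs _, fun h₁ h₂ g₁ g₂ => tsum_congr fun l => ?_, ?_⟩
  · rw [show (h₁ * g₂ * h₂⁻¹)⁻¹ * (h₁ * g₁ * h₂⁻¹) = h₂ * (g₂⁻¹ * g₁) * h₂⁻¹ by group,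
      LinearMap.trace_map_conj]
  · exact IsPSDKernel.tsum (fun l => (isPSDKernel_re_trace (hunit l)).const_mul (ha l))
      fun g₁ g₂ => (habs _).of_abs

/-- Sufficiency direction of Theorem 1: given a countable family of finite-dimensional unitary
representations `π λ` of a group `G`, with characters `χ λ = tr ∘ π λ`, and nonnegative
coefficients `a λ` with `∑ d_λ a_λ < ∞`, the series
`k(g₁, g₂) = ∑_λ a_λ Re χ_λ(g₂⁻¹ g₁)` converges absolutely, defines a bi-invariant kernel,
and this kernel is positive semidefinite. -/
theorem stationary_kernel_on_group {G : Type*} [Group G]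
    {Λ : Type*} [Countable Λ]
    (V : Λ → Type*) [∀ l, NormedAddCommGroup (V l)] [∀ l, InnerProductSpace ℂ (V l)]
    [∀ l, FiniteDimensional ℂ (V l)]
    (π : ∀ l, G →* (V l →ₗ[ℂ] V l))
    (hunit : ∀ (l : Λ) (g : G) (u v : V l),
      (@inner ℂ (V l) _ (π l g u) (π l g v)) = @inner ℂ (V l) _ u v)
    (a : Λ → ℝ) (ha : ∀ l, 0 ≤ a l)
    (hsum : Summable fun l => (Module.finrank ℂ (V l) : ℝ) * a l) :
    (∀ g₁ g₂ : G,
      Summable fun l => |a l * (LinearMap.trace ℂ (V l) (π l (g₂⁻¹ * g₁))).re|) ∧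
    (∀ h₁ h₂ g₁ g₂ : G,
      (∑' l, a l * (LinearMap.trace ℂ (V l)
          (π l ((h₁ * g₂ * h₂⁻¹)⁻¹ * (h₁ * g₁ * h₂⁻¹)))).re) =
        ∑' l, a l * (LinearMap.trace ℂ (V l) (π l (g₂⁻¹ * g₁))).re) ∧
    IsPSDKernel (fun g₁ g₂ : G =>
      ∑' l, a l * (LinearMap.trace ℂ (V l) (π l (g₂⁻¹ * g₁))).re) :=
  stationary_kernel_on_group_general V π hunit a ha hsum
end

section
/- Let π be a unitary representation of a group G on a finite-dimensional complex inner product space V, let H be a subgroup of G, let e₁, …, e_r ∈ V satisfy π(h) e_j = e_j for all h ∈ H and 1 ≤ j ≤ r, and let A be an r × r real symmetric positive semidefinite matrix. Then there is a well-defined function k on (G/H) × (G/H) (where G/H is the set of left cosets of H) with k(g₁H, g₂H) = ∑_{j,k=1}^r A_{jk} · Re(⟨e_k, π(g₂⁻¹ · g₁) e_j⟩) for all g₁, g₂ ∈ G; this k is invariant under the natural left action of G on G/H, i.e. k(g • x, g • y) = k(x, y) for all g ∈ G and x, y ∈ G/H, and k is a positive semidefinite kernel on G/H. (This is the sufficiency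 direction of the paper's Theorem 2 on stationary kernels on homogeneous spaces.) -/
/-! Write `A = Bᵀ B` and `v_m = ∑_j B_{mj} e_j`. The `v_m` are again `H`-fixed, so
`Φ_m(gH) = π(g) v_m` is well defined on `G/H`, and by unitarity the required kernel is
`k(x, y) = ∑_m Re ⟨Φ_m(y), Φ_m(x)⟩`: a sum of Gram kernels, hence positive semidefinite, and
`G`-invariant because `Φ_m(g • x) = π(g) Φ_m(x)` with `π(g)` unitary. -/

open Finset RCLike
open scoped Matrix InnerProductSpace

theorem IsPSDKernel.sum {ι X : Type*} (s : Finset ι) {k : ι → X → X → ℝ}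
    (hk : ∀ i ∈ s, IsPSDKernel (k i)) : IsPSDKernel fun x y => ∑ i ∈ s, k i x y := by
  intro n x c
  simp_rw [mul_sum]
  rw [sum_congr rfl fun i _ => sum_comm, sum_comm]
  exact sum_nonneg fun i hi => hk i hi n x c

theorem isPSDKernel_re_inner {𝕜 E X : Type*} [RCLike 𝕜] [SeminormedAddCommGroup E]
    [InnerProductSpace 𝕜 E] (Φ : X → E) : IsPSDKernel fun x y => re ⟪Φ y, Φ x⟫_𝕜 := by
  intro n x c
  have h : ∑ i, ∑ j, c i * c j * re ⟪Φ (x j), Φ (x i)⟫_𝕜 =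
      re ⟪∑ j, (c j : 𝕜) • Φ (x j), ∑ i, (c i : 𝕜) • Φ (x i)⟫_𝕜 := by
    simp only [sum_inner, inner_sum, inner_smul_real_left, inner_smul_real_right, map_sum,
      smul_re, mul_sum, mul_assoc]
  exact h ▸ inner_self_nonneg

open scoped ComplexOrder MatrixOrder in
theorem Matrix.PosSemidef.exists_eq_conjTranspose_mul_self {n 𝕜 : Type*} [Fintype n] [RCLike 𝕜]
    {A : Matrix n n 𝕜} (hA : A.PosSemidef) : ∃ B : Matrix n n 𝕜, A = Bᴴ * B := by
  classical
  refine ⟨CFC.sqrt A, ?_⟩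
  rw [(Matrix.nonneg_iff_posSemidef.mp (CFC.sqrt_nonneg A)).isHermitian.eq,
    CFC.sqrt_mul_sqrt_self A hA.nonneg]

theorem sum_re_inner_linearCombination {𝕜 E ι κ : Type*} [RCLike 𝕜] [SeminormedAddCommGroup E]
    [InnerProductSpace 𝕜 E] [Fintype ι] [Fintype κ] (T : E →ₗ[𝕜] E) (B : Matrix κ ι ℝ)
    (e : ι → E) :
    ∑ m, re ⟪∑ l, (B m l : 𝕜) • e l, T (∑ j, (B m j : 𝕜) • e j)⟫_𝕜 =
      ∑ j, ∑ l, (Bᴴ * B) j l * re ⟪e l, T (e j)⟫_𝕜 := by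
  simp only [map_sum, map_smul, sum_inner, inner_sum, inner_smul_real_left,
    inner_smul_real_right, smul_re, Matrix.mul_apply, Matrix.conjTranspose_apply, star_trivial,
    mul_sum, sum_mul, mul_assoc]
  rw [sum_comm]
  exact sum_congr rfl fun j _ => sum_comm

namespace Representation

variable {R G V : Type*} [CommSemiring R] [Group G] [AddCommMonoid V] [Module R V]
  (ρ : Representation R G V) {H : Subgroup G} {v : V}

def cosetOrbit (hv : ∀ h ∈ H, ρ h v = v) : G ⧸ H → V :=
  fun x => Quotient.liftOn' x (fun g => ρ g v) fun a b hab => by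
    rw [← mul_inv_cancel_left a b, map_mul, Module.End.mul_apply,
      hv _ (QuotientGroup.leftRel_apply.mp hab)]

@[simp]
theorem cosetOrbit_mk (hv : ∀ h ∈ H, ρ h v = v) (g : G) : cosetOrbit ρ hv g = ρ g v := rfl

theorem cosetOrbit_smul (hv : ∀ h ∈ H, ρ h v = v) (g : G) (x : G ⧸ H) :
    cosetOrbit ρ hv (g • x) = ρ g (cosetOrbit ρ hv x) := by
  induction x using QuotientGroup.induction_on with
  | H a => simp [map_mul]

theorem inner_apply_apply_eq_inner_inv_mul {𝕜 E : Type*} [RCLike 𝕜] [SeminormedAddCommGroup E]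
    [InnerProductSpace 𝕜 E] (ρ : Representation 𝕜 G E)
    (hρ : ∀ g u w, ⟪ρ g u, ρ g w⟫_𝕜 = ⟪u, w⟫_𝕜) (g₁ g₂ : G) (u w : E) :
    ⟪ρ g₂ u, ρ g₁ w⟫_𝕜 = ⟪u, ρ (g₂⁻¹ * g₁) w⟫_𝕜 := by
  rw [← hρ g₂ u, ← Module.End.mul_apply, ← map_mul, mul_inv_cancel_left]

end Representation

theorem stationary_kernel_on_homogeneous_space_general {G : Type*} [Group G]
    {V : Type*} [NormedAddCommGroup V] [InnerProductSpace ℂ V]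
    (π : G →* (V →ₗ[ℂ] V))
    (hunit : ∀ (g : G) (u v : V), (@inner ℂ V _ (π g u) (π g v)) = @inner ℂ V _ u v)
    (H : Subgroup G) {r : ℕ} (e : Fin r → V)
    (hinv : ∀ h ∈ H, ∀ j : Fin r, π h (e j) = e j)
    (A : Matrix (Fin r) (Fin r) ℝ) (hA : A.PosSemidef) :
    ∃ k : G ⧸ H → G ⧸ H → ℝ,
      (∀ g₁ g₂ : G, k (g₁ : G ⧸ H) (g₂ : G ⧸ H) =
        ∑ j : Fin r, ∑ l : Fin r,
          A j l * (@inner ℂ V _ (e l) (π (g₂⁻¹ * g₁) (e j))).re) ∧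
      (∀ (g : G) (x y : G ⧸ H), k (g • x) (g • y) = k x y) ∧
      IsPSDKernel k := by
  obtain ⟨B, rfl⟩ := hA.exists_eq_conjTranspose_mul_self
  let v : Fin r → V := fun m => ∑ j, (B m j : ℂ) • e j
  have hv : ∀ m, ∀ h ∈ H, π h (v m) = v m := fun m h hh => by
    simp only [v, map_sum, map_smul, hinv h hh]
  let Φ m := Representation.cosetOrbit π (hv m)
  refine ⟨fun x y => ∑ m, re ⟪Φ m y, Φ m x⟫_ℂ, fun g₁ g₂ => ?_, fun g x y => ?_,
    IsPSDKernel.sum _ fun m _ => isPSDKernel_re_inner (Φ m)⟩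
  · simp only [Φ, Representation.cosetOrbit_mk,
      Representation.inner_apply_apply_eq_inner_inv_mul π hunit]
    exact sum_re_inner_linearCombination _ B e
  · simp only [Φ, Representation.cosetOrbit_smul, hunit]

/-- Sufficiency direction of Theorem 2: for a unitary representation `π` of `G` on a
finite-dimensional complex inner product space `V`, a subgroup `H ≤ G`, vectors
`e₁, …, e_r` fixed by `π(h)` for all `h ∈ H`, and a real symmetric positive semidefinite
matrix `A`, there is a well-defined kernel `k` on `G/H` with
`k(g₁H, g₂H) = ∑_{j,k} A_{jk} Re⟨e_k, π(g₂⁻¹ g₁) e_j⟩`, and this kernel is `G`-invariant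
and positive semidefinite. -/
theorem stationary_kernel_on_homogeneous_space {G : Type*} [Group G]
    {V : Type*} [NormedAddCommGroup V] [InnerProductSpace ℂ V] [FiniteDimensional ℂ V]
    (π : G →* (V →ₗ[ℂ] V))
    (hunit : ∀ (g : G) (u v : V), (@inner ℂ V _ (π g u) (π g v)) = @inner ℂ V _ u v)
    (H : Subgroup G) {r : ℕ} (e : Fin r → V)
    (hinv : ∀ h ∈ H, ∀ j : Fin r, π h (e j) = e j)
    (A : Matrix (Fin r) (Fin r) ℝ) (hA : A.PosSemidef) :
    ∃ k : G ⧸ H → G ⧸ H → ℝ,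
      (∀ g₁ g₂ : G, k (g₁ : G ⧸ H) (g₂ : G ⧸ H) =
        ∑ j : Fin r, ∑ l : Fin r,
          A j l * (@inner ℂ V _ (e l) (π (g₂⁻¹ * g₁) (e j))).re) ∧
      (∀ (g : G) (x y : G ⧸ H), k (g • x) (g • y) = k x y) ∧
      IsPSDKernel k :=
  stationary_kernel_on_homogeneous_space_general π hunit H e hinv A hA
end

section
/- Let (S, μ) be a measure space with μ a probability measure, let d, r be positive integers, and let ψ_{jk} : S → ℂ (1 ≤ j ≤ d, 1 ≤ k ≤ r) be measurable functions satisfying the orthogonality relations ∫_S ψ_{j₁k₁}(u) · conj(ψ_{j₂k₂}(u)) dμ(u) = 1/d if (j₁, k₁) = (j₂, k₂) and 0 otherwise. Let a be an r × r real symmetric matrix and define K(x, y) := ∑_{k₁,k₂=1}^r a_{k₁k₂} · ∑_{j=1}^d ψ_{jk₁}(x) · conj(ψ_{jk₂}(y)). Then K(x, y) = ∫_S K(x, u) · conj(K(y, u)) dμ(u) holds for all x, y ∈ S if and only if the matrix A := (1/d) · a is idempotent, i.e. A · A = A. (This is the paper's Proposition 5 characterizing valid phase functions on homogeneous spaces,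 stated via the orthogonality relations satisfied by matrix coefficients.) -/
/-!
Write `K_b(x, y) = ∑_{k₁,k₂} b_{k₁k₂} ∑_j ψ_{jk₁}(x) conj ψ_{jk₂}(y)` for any complex `r × r`
matrix `b`. Expanding `u ↦ K_b(x, u)` in the orthogonal system `conj ψ_{jk}`, Parseval's
identity gives `∫ K_b(x, u) conj K_{b'}(y, u) dμ(u) = K_{(1/d) b b'ᴴ}(x, y)`, and the same
orthogonality (applied once in each variable) shows that `b ↦ K_b` is injective.
For real symmetric `a` this turns the reproducing identity into `a = (1/d) a a`,
i.e. into idempotency of `(1/d) a`.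
-/

open MeasureTheory

open scoped ComplexConjugate Matrix

section OrthogonalSystem

variable {S ι κ : Type*} [MeasurableSpace S] {μ : Measure S} [DecidableEq ι]

/-- `c` is the common value of `‖φ i‖²`, hence real. -/
def IsOrthogonalSystem (μ : Measure S) (φ : ι → S → ℂ) (c : ℝ) : Prop :=
  ∀ i i', ∫ u, φ i u * conj (φ i' u) ∂μ = if i = i' then (c : ℂ) else 0

namespace IsOrthogonalSystem

variable {φ : ι → S → ℂ} {c : ℝ}

theorem star (h : IsOrthogonalSystem μ φ c) :
    IsOrthogonalSystem μ (fun i u => conj (φ i u)) c := by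
  intro i i'
  calc ∫ u, conj (φ i u) * conj (conj (φ i' u)) ∂μ
      = conj (∫ u, φ i u * conj (φ i' u) ∂μ) := by
        rw [← integral_conj]; simp
    _ = if i = i' then (c : ℂ) else 0 := by
        rw [h]; split_ifs <;> simp

theorem comp [DecidableEq κ] (h : IsOrthogonalSystem μ φ c) {e : κ → ι}
    (he : Function.Injective e) : IsOrthogonalSystem μ (fun k => φ (e k)) c := by
  intro k k'
  simp only [h (e k) (e k'), he.eq_iff]

variable [Fintype ι]

theorem integral_sum_mul_conj_sum (h : IsOrthogonalSystem μ φ c)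
    (hφ : ∀ i, MemLp (φ i) 2 μ) (α β : ι → ℂ) :
    ∫ u, (∑ i, α i * φ i u) * conj (∑ i, β i * φ i u) ∂μ = c * ∑ i, α i * conj (β i) := by
  have hexpand : ∀ u, (∑ i, α i * φ i u) * conj (∑ i, β i * φ i u) =
      ∑ i, ∑ i', α i * conj (β i') * (φ i u * conj (φ i' u)) := by
    intro u
    simp only [map_sum, map_mul, Finset.sum_mul_sum]
    exact Finset.sum_congr rfl fun _ _ => Finset.sum_congr rfl fun _ _ => by ring
  have hint : ∀ i i', Integrable (fun u => φ i u * conj (φ i' u)) μ :=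
    fun i i' => (hφ i).integrable_mul (hφ i').star
  simp_rw [hexpand]
  rw [integral_finsetSum _ fun i _ => integrable_finsetSum _ fun i' _ => (hint i i').const_mul _]
  calc ∑ i, ∫ u, ∑ i', α i * conj (β i') * (φ i u * conj (φ i' u)) ∂μ
      = ∑ i, ∑ i', α i * conj (β i') * (if i = i' then (c : ℂ) else 0) := by
        refine Finset.sum_congr rfl fun i _ => ?_
        rw [integral_finsetSum _ fun i' _ => (hint i i').const_mul _]
        simp only [integral_const_mul, h i]
    _ = c * ∑ i, α i * conj (β i) := by
        simp only [mul_ite, mul_zero, Finset.sum_ite_eq, Finset.mem_univ, if_true, Finset.mul_sum]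
        exact Finset.sum_congr rfl fun i _ => mul_comm _ _

theorem eq_zero_of_sum_eq_zero (h : IsOrthogonalSystem μ φ c) (hφ : ∀ i, MemLp (φ i) 2 μ)
    (hc : c ≠ 0) {α : ι → ℂ} (hα : ∀ u, ∑ i, α i * φ i u = 0) : α = 0 := by
  funext m
  have := h.integral_sum_mul_conj_sum hφ α (Pi.single m 1)
  simp only [hα, Pi.single_apply, ite_mul, one_mul, zero_mul, Finset.sum_ite_eq', Finset.mem_univ,
    ↓reduceIte, integral_zero, MonoidWithZeroHom.map_ite_one_zero, mul_ite, mul_one, mul_zero,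
    zero_eq_mul, Complex.ofReal_eq_zero] at this
  exact this.resolve_left hc

end IsOrthogonalSystem

end OrthogonalSystem

section PhaseKernel

variable {S m n : Type*} [Fintype m] [Fintype n]

def phaseKernel (ψ : m → n → S → ℂ) (b : Matrix n n ℂ) (x y : S) : ℂ :=
  ∑ k₁, ∑ k₂, b k₁ k₂ * ∑ j, ψ j k₁ x * conj (ψ j k₂ y)

theorem phaseKernel_eq_sum_dotProduct (ψ : m → n → S → ℂ) (b : Matrix n n ℂ) (x y : S) :
    phaseKernel ψ b x y = ∑ j, (fun k => ψ j k x) ⬝ᵥ b *ᵥ star (fun k => ψ j k y) := by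
  simp only [phaseKernel, dotProduct, Matrix.mulVec, Finset.mul_sum, Pi.star_apply,
    RCLike.star_def]
  rw [Finset.sum_comm_cycle]
  exact Finset.sum_congr rfl fun j _ => Finset.sum_congr rfl fun k₁ _ =>
    Finset.sum_congr rfl fun k₂ _ => by ring

theorem phaseKernel_eq_sum (ψ : m → n → S → ℂ) (b : Matrix n n ℂ) (x y : S) :
    phaseKernel ψ b x y = ∑ p : m × n, ((fun k => ψ p.1 k x) ᵥ* b) p.2 * conj (ψ p.1 p.2 y) := by
  simp only [phaseKernel_eq_sum_dotProduct, Matrix.dotProduct_mulVec, Fintype.sum_prod_type]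
  rfl

theorem phaseKernel_sub (ψ : m → n → S → ℂ) (b b' : Matrix n n ℂ) (x y : S) :
    phaseKernel ψ (b - b') x y = phaseKernel ψ b x y - phaseKernel ψ b' x y := by
  simp only [phaseKernel, Matrix.sub_apply, sub_mul, Finset.sum_sub_distrib]

variable [MeasurableSpace S] {μ : Measure S} [DecidableEq m] [DecidableEq n]
  {ψ : m → n → S → ℂ} {c : ℝ}

theorem integral_phaseKernel_mul_conj (hψ : IsOrthogonalSystem μ (fun p : m × n => ψ p.1 p.2) c)
    (hL2 : ∀ j k, MemLp (ψ j k) 2 μ) (b b' : Matrix n n ℂ) (x y : S) :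
    ∫ u, phaseKernel ψ b x u * conj (phaseKernel ψ b' y u) ∂μ =
      phaseKernel ψ (c • (b * b'ᴴ)) x y := by
  calc ∫ u, phaseKernel ψ b x u * conj (phaseKernel ψ b' y u) ∂μ
      = c * ∑ p : m × n, ((fun k => ψ p.1 k x) ᵥ* b) p.2 *
          conj (((fun k => ψ p.1 k y) ᵥ* b') p.2) := by
        simp only [phaseKernel_eq_sum ψ b, phaseKernel_eq_sum ψ b']
        exact hψ.star.integral_sum_mul_conj_sum (fun p => (hL2 p.1 p.2).star) _ _
    _ = ∑ j, c • ((fun k => ψ j k x) ᵥ* b ⬝ᵥ star ((fun k => ψ j k y) ᵥ* b')) := by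
        rw [Fintype.sum_prod_type, Finset.mul_sum]
        rfl
    _ = phaseKernel ψ (c • (b * b'ᴴ)) x y := by
        simp only [phaseKernel_eq_sum_dotProduct, Matrix.smul_mulVec, dotProduct_smul,
          ← Matrix.mulVec_mulVec, Matrix.dotProduct_mulVec, Matrix.star_vecMul]

theorem phaseKernel_eq_zero (hψ : IsOrthogonalSystem μ (fun p : m × n => ψ p.1 p.2) c)
    (hL2 : ∀ j k, MemLp (ψ j k) 2 μ) (hc : c ≠ 0) [Nonempty m] {b : Matrix n n ℂ}
    (h : ∀ x y, phaseKernel ψ b x y = 0) : b = 0 := by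
  have hcoeff : ∀ x (p : m × n), ((fun k => ψ p.1 k x) ᵥ* b) p.2 = 0 := fun x =>
    congrFun (hψ.star.eq_zero_of_sum_eq_zero (fun p => (hL2 p.1 p.2).star) hc
      fun y => (phaseKernel_eq_sum ψ b x y).symm.trans (h x y))
  obtain ⟨j⟩ := ‹Nonempty m›
  ext k₁ k₂
  exact congrFun ((hψ.comp (Prod.mk_right_injective j)).eq_zero_of_sum_eq_zero (hL2 j) hc
    fun x => by simpa only [Matrix.vecMul, dotProduct, mul_comm] using hcoeff x (j, k₂)) k₁

theorem phaseKernel_eq_iff (hψ : IsOrthogonalSystem μ (fun p : m × n => ψ p.1 p.2) c)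
    (hL2 : ∀ j k, MemLp (ψ j k) 2 μ) (hc : c ≠ 0) [Nonempty m] {b b' : Matrix n n ℂ} :
    (∀ x y, phaseKernel ψ b x y = phaseKernel ψ b' x y) ↔ b = b' := by
  refine ⟨fun h => sub_eq_zero.mp (phaseKernel_eq_zero hψ hL2 hc fun x y => ?_), ?_⟩
  · rw [phaseKernel_sub, h, sub_self]
  · rintro rfl x y
    rfl

end PhaseKernel

theorem isIdempotentElem_smul_iff {K A : Type*} [Field K] [Ring A] [Algebra K A] {c : K}
    (hc : c ≠ 0) {a : A} : IsIdempotentElem (c • a) ↔ a = c • (a * a) := by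
  rw [IsIdempotentElem, smul_mul_smul, mul_smul, (smul_right_injective A hc).eq_iff, eq_comm]

theorem phase_function_iff_idempotent_general {S : Type*} [MeasurableSpace S]
    (μ : Measure S) {d r : ℕ} (hd : 0 < d)
    (ψ : Fin d → Fin r → S → ℂ)
    (hL2 : ∀ j k, MemLp (ψ j k) 2 μ)
    (horth : ∀ (j₁ j₂ : Fin d) (k₁ k₂ : Fin r),
      ∫ u, ψ j₁ k₁ u * (starRingEnd ℂ) (ψ j₂ k₂ u) ∂μ =
        if j₁ = j₂ ∧ k₁ = k₂ then (1 : ℂ) / d else 0)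
    (a : Matrix (Fin r) (Fin r) ℝ) (ha : a.IsSymm) :
    (∀ x y : S,
      (∑ k₁ : Fin r, ∑ k₂ : Fin r, (a k₁ k₂ : ℂ) *
          ∑ j : Fin d, ψ j k₁ x * (starRingEnd ℂ) (ψ j k₂ y)) =
        ∫ u,
          (∑ k₁ : Fin r, ∑ k₂ : Fin r, (a k₁ k₂ : ℂ) *
            ∑ j : Fin d, ψ j k₁ x * (starRingEnd ℂ) (ψ j k₂ u)) *
          (starRingEnd ℂ) (∑ k₁ : Fin r, ∑ k₂ : Fin r, (a k₁ k₂ : ℂ) *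
            ∑ j : Fin d, ψ j k₁ y * (starRingEnd ℂ) (ψ j k₂ u)) ∂μ) ↔
      ((d : ℝ)⁻¹ • a) * ((d : ℝ)⁻¹ • a) = (d : ℝ)⁻¹ • a := by
  have hψ : IsOrthogonalSystem μ (fun p : Fin d × Fin r => ψ p.1 p.2) (d : ℝ)⁻¹ := fun p q => by
    simpa [Prod.ext_iff] using horth p.1 q.1 p.2 q.2
  have hc : (d : ℝ)⁻¹ ≠ 0 := by positivity
  have : Nonempty (Fin d) := ⟨⟨0, hd⟩⟩
  have hself : (a.map (↑) : Matrix (Fin r) (Fin r) ℂ)ᴴ = a.map (↑) := by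
    rw [← Matrix.conjTranspose_map _ fun x => (Complex.conj_ofReal x).symm,
      Matrix.conjTranspose_eq_transpose_of_trivial, ha.eq]
  change (∀ x y, phaseKernel ψ (a.map (↑)) x y =
      ∫ u, phaseKernel ψ (a.map (↑)) x u * conj (phaseKernel ψ (a.map (↑)) y u) ∂μ) ↔ _
  simp only [integral_phaseKernel_mul_conj hψ hL2, hself, phaseKernel_eq_iff hψ hL2 hc]
  rw [← IsIdempotentElem, isIdempotentElem_smul_iff hc]
  have hmap : ((d : ℝ)⁻¹ • (a * a)).map (↑) =
      (d : ℝ)⁻¹ • (a.map (↑) * a.map (↑) : Matrix (Fin r) (Fin r) ℂ) := by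
    rw [Matrix.map_smul _ _ fun x => by rw [smul_eq_mul, Complex.ofReal_mul, Complex.real_smul]]
    exact congrArg _ (Matrix.map_mul (f := Complex.ofRealHom))
  rw [← hmap, (Matrix.map_injective Complex.ofReal_injective).eq_iff]

/-- Proposition 5 of the paper: with functions `ψ_{jk}` satisfying the orthogonality
relations `∫ ψ_{j₁k₁} conj(ψ_{j₂k₂}) dμ = δ · (1/d)` of matrix coefficients, and a real
symmetric `r × r` matrix `a`, the kernel
`K(x,y) = ∑_{k₁,k₂} a_{k₁k₂} ∑_j ψ_{jk₁}(x) conj(ψ_{jk₂}(y))` satisfies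
`K(x, y) = ∫ K(x, u) conj(K(y, u)) dμ(u)` for all `x, y` if and only if the matrix
`A = (1/d) a` is idempotent. -/
theorem phase_function_iff_idempotent {S : Type*} [MeasurableSpace S]
    (μ : Measure S) [IsProbabilityMeasure μ] {d r : ℕ} (hd : 0 < d) (hr : 0 < r)
    (ψ : Fin d → Fin r → S → ℂ)
    (hmeas : ∀ j k, Measurable (ψ j k))
    (hL2 : ∀ j k, MemLp (ψ j k) 2 μ)
    (horth : ∀ (j₁ j₂ : Fin d) (k₁ k₂ : Fin r),
      ∫ u, ψ j₁ k₁ u * (starRingEnd ℂ) (ψ j₂ k₂ u) ∂μ =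
        if j₁ = j₂ ∧ k₁ = k₂ then (1 : ℂ) / d else 0)
    (a : Matrix (Fin r) (Fin r) ℝ) (ha : a.IsSymm) :
    (∀ x y : S,
      (∑ k₁ : Fin r, ∑ k₂ : Fin r, (a k₁ k₂ : ℂ) *
          ∑ j : Fin d, ψ j k₁ x * (starRingEnd ℂ) (ψ j k₂ y)) =
        ∫ u,
          (∑ k₁ : Fin r, ∑ k₂ : Fin r, (a k₁ k₂ : ℂ) *
            ∑ j : Fin d, ψ j k₁ x * (starRingEnd ℂ) (ψ j k₂ u)) *
          (starRingEnd ℂ) (∑ k₁ : Fin r, ∑ k₂ : Fin r, (a k₁ k₂ : ℂ) *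
            ∑ j : Fin d, ψ j k₁ y * (starRingEnd ℂ) (ψ j k₂ u)) ∂μ) ↔
      ((d : ℝ)⁻¹ • a) * ((d : ℝ)⁻¹ • a) = (d : ℝ)⁻¹ • a :=
  phase_function_iff_idempotent_general μ hd ψ hL2 horth a ha
end

section
/- Let S be a nonempty set, let N ≥ 1, and let φ₁, …, φ_N : S → ℂ be linearly independent as elements of the complex vector space of all functions S → ℂ. Then there exist points x₁, …, x_N ∈ S such that for every 1 ≤ k ≤ N the k × k matrix M_k with entries (M_k)_{ij} = φᵢ(xⱼ) (1 ≤ i, j ≤ k) has nonzero determinant. (This is the paper's Lemma on the existence of fundamental sets.) -/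
/-!
Choose the points one at a time. Given `x₁, …, x_k` with `det M_k ≠ 0`, expand
`det M_{k+1}` along its last column as a function of the new point `y`: it equals
`∑ cᵢ φᵢ(y)`, where the cofactors `cᵢ` do not depend on `y` and `c_{k+1} = ± det M_k ≠ 0`.
By linear independence this combination is not the zero function, so some `y` works.
-/

open Matrix

theorem det_of_snoc_eq_sum {R S : Type*} [CommRing R] {k : ℕ} (φ : Fin (k + 1) → S → R)
    (x : Fin k → S) (y : S) :
    (Matrix.of fun i j => φ i (Fin.snoc (α := fun _ => S) x y j)).det =
      ∑ i : Fin (k + 1),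
        (-1) ^ ((i : ℕ) + k) * (Matrix.of fun i' j => φ (i.succAbove i') (x j)).det * φ i y := by
  rw [det_succ_column _ (Fin.last k)]
  refine Finset.sum_congr rfl fun i _ => ?_
  simp only [submatrix, of_apply, Fin.succAbove_last, Fin.snoc_castSucc, Fin.snoc_last,
    Fin.val_last]
  ring

theorem exists_det_of_snoc_ne_zero {R S : Type*} [CommRing R] {k : ℕ}
    {φ : Fin (k + 1) → S → R} (hφ : LinearIndependent R φ) {x : Fin k → S}
    (hx : (Matrix.of fun i j => φ (Fin.castSucc i) (x j)).det ≠ 0) :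
    ∃ y, (Matrix.of fun i j => φ i (Fin.snoc (α := fun _ => S) x y j)).det ≠ 0 := by
  by_contra! hdet
  set c : Fin (k + 1) → R :=
    fun i => (-1) ^ ((i : ℕ) + k) * (Matrix.of fun i' j => φ (i.succAbove i') (x j)).det
  have hsum : ∑ i, c i • φ i = 0 := by
    funext y
    simpa [det_of_snoc_eq_sum] using hdet y
  have hlast : c (Fin.last k) = 0 := Fintype.linearIndependent_iff.mp hφ c hsum _
  simp only [c, Fin.succAbove_last, neg_one_pow_mul_eq_zero_iff] at hlast
  exact hx hlast

theorem exists_leading_minors_det_ne_zero {R S : Type*} [CommRing R] [Nontrivial R] :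
    ∀ {n : ℕ} {φ : Fin n → S → R}, LinearIndependent R φ →
      ∃ x : Fin n → S, ∀ (k : ℕ) (hkn : k ≤ n),
        (Matrix.of fun i j : Fin k => φ (Fin.castLE hkn i) (x (Fin.castLE hkn j))).det ≠ 0
  | 0, _, _ => ⟨finZeroElim, fun k hk => by
      obtain rfl := Nat.le_zero.mp hk
      simp⟩
  | n + 1, φ, hφ => by
    obtain ⟨x, hx⟩ := exists_leading_minors_det_ne_zero
      (hφ.comp _ (Fin.castSucc_injective n))
    obtain ⟨y, hy⟩ := exists_det_of_snoc_ne_zero hφ (by simpa using hx n le_rfl)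
    refine ⟨Fin.snoc x y, fun k hkn => ?_⟩
    rcases hkn.eq_or_lt with rfl | hlt
    · simpa using hy
    · have hcast : ∀ i : Fin k, Fin.castLE hkn i = Fin.castSucc (Fin.castLE (by omega) i) :=
        fun i => rfl
      simpa only [hcast, Fin.snoc_castSucc, Function.comp_apply] using hx k (by omega)

theorem exists_fundamental_set_general {S : Type*} {N : ℕ}
    (φ : Fin N → S → ℂ) (hφ : LinearIndependent ℂ φ) :
    ∃ x : Fin N → S, ∀ (k : ℕ) (hk1 : 1 ≤ k) (hkN : k ≤ N),
      (Matrix.of fun i j : Fin k =>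
        φ (Fin.castLE hkN i) (x (Fin.castLE hkN j))).det ≠ 0 := by
  obtain ⟨x, hx⟩ := exists_leading_minors_det_ne_zero hφ
  exact ⟨x, fun k _ hkN => hx k hkN⟩

/-- Existence of fundamental sets: if `φ₁, …, φ_N : S → ℂ` are linearly independent
functions on a nonempty set `S`, then there exist points `x₁, …, x_N ∈ S` such that for
every `1 ≤ k ≤ N` the `k × k` matrix `(φᵢ(xⱼ))_{1 ≤ i,j ≤ k}` has nonzero determinant. -/
theorem exists_fundamental_set {S : Type*} [Nonempty S] {N : ℕ} (hN : 1 ≤ N)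
    (φ : Fin N → S → ℂ) (hφ : LinearIndependent ℂ φ) :
    ∃ x : Fin N → S, ∀ (k : ℕ) (hk1 : 1 ≤ k) (hkN : k ≤ N),
      (Matrix.of fun i j : Fin k =>
        φ (Fin.castLE hkN i) (x (Fin.castLE hkN j))).det ≠ 0 :=
  exists_fundamental_set_general φ hφ
end

section
/- Let n ≥ 1, let a > 0 and ν > 0 be real numbers, and let z ∈ ℝⁿ. Then ∫_{ℝⁿ} (a + 4π²‖ξ‖²)^{-(ν + n/2)} · e^{2πi⟨z, ξ⟩} dξ = (4π)^{-n/2} · Γ(ν + n/2)⁻¹ · ∫₀^∞ u^{ν−1} · e^{−a·u} · e^{−‖z‖²/(4u)} du, where both integrals converge absolutely and the left-hand side (a priori complex) equals the real right-hand side. (This identity is the content of the paper's proof that the Euclidean Matérn kernel is a Gamma mixture of squared exponential (heat) kernels.) -/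
/-!
With `t = a + 4π²‖ξ‖²` and `s = ν + n/2`, write `t^{-s} = Γ(s)⁻¹ ∫₀^∞ u^{s-1} e^{-tu} du`.
The double integral converges absolutely (by Tonelli its absolute value integrates to
`Γ(s) ∫ t^{-s} dξ < ∞`, as `2s > n`), so the integrals may be swapped. For fixed `u` the
`ξ`-integral is the Fourier transform of the Gaussian `e^{-4π²u‖ξ‖²}`, i.e. the heat kernel
`(4πu)^{-n/2} e^{-‖z‖²/(4u)}`, whose factor `u^{-n/2}` turns `u^{s-1}` into `u^{ν-1}`.
-/

open MeasureTheory Real Set Module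
open scoped Complex InnerProductSpace

lemma integrableOn_rpow_sub_one_mul_exp_neg_mul {s t : ℝ} (hs : 0 < s) (ht : 0 < t) :
    IntegrableOn (fun u : ℝ => u ^ (s - 1) * rexp (-(t * u))) (Ioi 0) := by
  simpa [neg_mul] using
    integrableOn_rpow_mul_exp_neg_mul_rpow (s := s - 1) (by linarith) one_pos ht

theorem integrableOn_rpow_mul_exp_neg_mul_mul_exp_neg_div {ν a c : ℝ} (hν : 0 < ν) (ha : 0 < a)
    (hc : 0 ≤ c) :
    IntegrableOn (fun u : ℝ => u ^ (ν - 1) * rexp (-a * u) * rexp (-c / (4 * u))) (Ioi 0) := by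
  refine (integrableOn_rpow_sub_one_mul_exp_neg_mul hν ha).mono' (by fun_prop)
    ((ae_restrict_mem measurableSet_Ioi).mono fun u (hu : 0 < u) => ?_)
  have h_nonneg : 0 ≤ u ^ (ν - 1) * rexp (-(a * u)) := by positivity
  rw [neg_mul, norm_of_nonneg (by positivity)]
  exact mul_le_of_le_one_right h_nonneg
    (exp_le_one_iff.2 (div_nonpos_of_nonpos_of_nonneg (neg_nonpos.2 hc) (by positivity)))

theorem integral_rpow_neg_mul_eq_inv_Gamma_mul_integral_Ioi_integral {α : Type*}
    [MeasurableSpace α] {μ : Measure α} [SFinite μ] {s : ℝ} {t : α → ℝ} {e : α → ℂ} (hs : 0 < s)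
    (ht : ∀ x, 0 < t x) (ht_meas : Measurable t) (he : AEStronglyMeasurable e μ)
    (hint : Integrable (fun x => ((t x ^ (-s) : ℝ) : ℂ) * e x) μ) :
    ∫ x, ((t x ^ (-s) : ℝ) : ℂ) * e x ∂μ =
      (Gamma s)⁻¹ * ∫ u in Ioi 0, ∫ x, ((u ^ (s - 1) * rexp (-(t x * u)) : ℝ) : ℂ) * e x ∂μ := by
  set g : α → ℝ → ℝ := fun x u => u ^ (s - 1) * rexp (-(t x * u))
  have hg_int (x : α) : ∫ u in Ioi 0, g x u = Gamma s * t x ^ (-s) := by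
    rw [integral_rpow_mul_exp_neg_mul_Ioi hs (ht x), one_div, inv_rpow (ht x).le,
      ← rpow_neg (ht x).le, mul_comm]
  have hF_int (x : α) :
      ∫ u in Ioi 0, ((g x u : ℝ) : ℂ) * e x = (Gamma s : ℂ) * (((t x ^ (-s) : ℝ) : ℂ) * e x) := by
    rw [integral_mul_const, integral_complex_ofReal, hg_int]
    push_cast; ring
  have hF_norm_int (x : α) :
      ∫ u in Ioi 0, ‖((g x u : ℝ) : ℂ) * e x‖ = Gamma s * ‖((t x ^ (-s) : ℝ) : ℂ) * e x‖ := by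
    have hg_nonneg : ∀ u ∈ Ioi (0 : ℝ), 0 ≤ g x u := fun u (hu : 0 < u) => by positivity
    rw [setIntegral_congr_fun measurableSet_Ioi fun u hu => by
        rw [norm_mul, Complex.norm_real, norm_of_nonneg (hg_nonneg u hu)],
      integral_mul_const, hg_int, norm_mul, Complex.norm_real,
      norm_of_nonneg (rpow_nonneg (ht x).le _), mul_assoc]
  have hF : Integrable (Function.uncurry fun x u => ((g x u : ℝ) : ℂ) * e x)
      (μ.prod (volume.restrict (Ioi 0))) := by
    have hg_meas : Measurable (Function.uncurry g) := by
      simp only [g, Function.uncurry_def]; fun_prop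
    have hF_meas : AEStronglyMeasurable (Function.uncurry fun x u => ((g x u : ℝ) : ℂ) * e x)
        (μ.prod (volume.restrict (Ioi 0))) :=
      (Complex.measurable_ofReal.comp hg_meas).aestronglyMeasurable.mul he.comp_fst
    refine (integrable_prod_iff hF_meas).2 ⟨.of_forall fun x => ?_, ?_⟩
    · exact ((integrableOn_rpow_sub_one_mul_exp_neg_mul hs (ht x)).ofReal (𝕜 := ℂ)).mul_const
        (e x)
    · simpa only [Function.uncurry_apply_pair, hF_norm_int] using
        hint.norm.const_mul (Gamma s)
  calc ∫ x, ((t x ^ (-s) : ℝ) : ℂ) * e x ∂μ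
      = ∫ x, (Gamma s : ℂ)⁻¹ * (∫ u in Ioi 0, ((g x u : ℝ) : ℂ) * e x) ∂μ := by
        refine integral_congr_ae (.of_forall fun x => ?_)
        dsimp only
        rw [hF_int, ← mul_assoc, inv_mul_cancel₀ (by exact_mod_cast (Gamma_pos_of_pos hs).ne'),
          one_mul]
    _ = _ := by rw [integral_const_mul, integral_integral_swap hF, Complex.ofReal_inv]

lemma norm_cexp_two_pi_I_mul_ofReal (r : ℝ) : ‖cexp (2 * π * Complex.I * r)‖ = 1 := by
  rw [show 2 * π * Complex.I * r = ((2 * π * r : ℝ) : ℂ) * Complex.I by push_cast; ring]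
  exact Complex.norm_exp_ofReal_mul_I _

theorem integrable_rpow_neg_add_mul_norm_sq {E : Type*} [NormedAddCommGroup E]
    [NormedSpace ℝ E] [FiniteDimensional ℝ E] [MeasurableSpace E] [BorelSpace E] {μ : Measure E}
    [μ.IsAddHaarMeasure] {a b s : ℝ} (ha : 0 < a) (hb : 0 < b) (hs : (finrank ℝ E : ℝ) < 2 * s) :
    Integrable (fun ξ : E => (a + b * ‖ξ‖ ^ 2) ^ (-s)) μ := by
  have hc : 0 < min a b := lt_min ha hb
  have h_int := (integrable_rpow_neg_one_add_norm_sq (μ := μ) hs).const_mul (min a b ^ (-s))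
  rw [show -(2 * s) / 2 = -s by ring] at h_int
  refine h_int.mono' (by fun_prop : Measurable _).aestronglyMeasurable (.of_forall fun ξ => ?_)
  have h_lower : min a b * (1 + ‖ξ‖ ^ 2) ≤ a + b * ‖ξ‖ ^ 2 := by
    nlinarith [min_le_left a b, min_le_right a b, sq_nonneg ‖ξ‖]
  rw [norm_of_nonneg (by positivity), ← mul_rpow hc.le (by positivity)]
  have hs_pos : 0 < s := by linarith [(finrank ℝ E).cast_nonneg (α := ℝ)]
  exact rpow_le_rpow_of_nonpos (by positivity) h_lower (by linarith)

theorem MeasureTheory.Integrable.ofReal_mul_cexp_two_pi_I_inner {V : Type*}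
    [NormedAddCommGroup V] [InnerProductSpace ℝ V] [MeasurableSpace V] [OpensMeasurableSpace V]
    {μ : Measure V} {f : V → ℝ} (hf : Integrable f μ) (z : V) :
    Integrable (fun ξ => (f ξ : ℂ) * cexp (2 * π * Complex.I * ⟪z, ξ⟫_ℝ)) μ :=
  hf.ofReal.mul_bdd (by fun_prop) (.of_forall fun ξ => (norm_cexp_two_pi_I_mul_ofReal _).le)

section Euclidean

variable {V : Type*} [NormedAddCommGroup V] [InnerProductSpace ℝ V] [FiniteDimensional ℝ V]
  [MeasurableSpace V] [BorelSpace V]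

theorem integral_cexp_neg_four_pi_sq_mul_norm_sq_add_inner {u : ℝ} (hu : 0 < u) (z : V) :
    ∫ ξ : V, cexp (-((4 * π ^ 2 * u : ℝ) : ℂ) * ‖ξ‖ ^ 2 + 2 * π * Complex.I * ⟪z, ξ⟫_ℝ) =
      (((4 * π * u) ^ (-(finrank ℝ V : ℝ) / 2) * rexp (-‖z‖ ^ 2 / (4 * u)) : ℝ) : ℂ) := by
  have hb : 0 < ((4 * π ^ 2 * u : ℝ) : ℂ).re := by rw [Complex.ofReal_re]; positivity
  have hbase : (π : ℂ) / ((4 * π ^ 2 * u : ℝ) : ℂ) = (((4 * π * u)⁻¹ : ℝ) : ℂ) := by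
    push_cast; field_simp
  have hexpo : (finrank ℝ V / 2 : ℂ) = ((finrank ℝ V / 2 : ℝ) : ℂ) := by push_cast; ring
  have hexp : (2 * π * Complex.I) ^ 2 * (‖z‖ : ℂ) ^ 2 / (4 * ((4 * π ^ 2 * u : ℝ) : ℂ)) =
      ((-‖z‖ ^ 2 / (4 * u) : ℝ) : ℂ) := by
    have hu' : (u : ℂ) ≠ 0 := by exact_mod_cast hu.ne'
    have hπ : (π : ℂ) ≠ 0 := by exact_mod_cast pi_ne_zero
    push_cast
    rw [mul_pow, mul_pow, Complex.I_sq]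
    field_simp
    ring
  rw [GaussianFourier.integral_cexp_neg_mul_sq_norm_add hb, hbase, hexpo, hexp,
    ← Complex.ofReal_cpow (by positivity), inv_rpow (by positivity), ← rpow_neg (by positivity),
    ← Complex.ofReal_exp, ← Complex.ofReal_mul, neg_div (2 : ℝ) (finrank ℝ V : ℝ)]

theorem integral_rpow_mul_exp_neg_mul_mul_cexp_inner (a ν : ℝ) {u : ℝ} (hu : 0 < u) (z : V) :
    ∫ ξ : V, ((u ^ (ν + finrank ℝ V / 2 - 1) * rexp (-((a + 4 * π ^ 2 * ‖ξ‖ ^ 2) * u)) : ℝ) : ℂ) *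
        cexp (2 * π * Complex.I * ⟪z, ξ⟫_ℝ) =
      (((4 * π) ^ (-(finrank ℝ V : ℝ) / 2) *
        (u ^ (ν - 1) * rexp (-a * u) * rexp (-‖z‖ ^ 2 / (4 * u))) : ℝ) : ℂ) := by
  have h_integrand (ξ : V) :
      ((u ^ (ν + finrank ℝ V / 2 - 1) * rexp (-((a + 4 * π ^ 2 * ‖ξ‖ ^ 2) * u)) : ℝ) : ℂ) *
          cexp (2 * π * Complex.I * ⟪z, ξ⟫_ℝ) =
        ((u ^ (ν + finrank ℝ V / 2 - 1) * rexp (-a * u) : ℝ) : ℂ) *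
          cexp (-((4 * π ^ 2 * u : ℝ) : ℂ) * ‖ξ‖ ^ 2 + 2 * π * Complex.I * ⟪z, ξ⟫_ℝ) := by
    rw [Complex.exp_add, show -((a + 4 * π ^ 2 * ‖ξ‖ ^ 2) * u) =
      -a * u + -(4 * π ^ 2 * u) * ‖ξ‖ ^ 2 by ring, exp_add]
    push_cast
    ring
  have h_pow : u ^ (ν + finrank ℝ V / 2 - 1) * (4 * π * u) ^ (-(finrank ℝ V : ℝ) / 2) =
      (4 * π) ^ (-(finrank ℝ V : ℝ) / 2) * u ^ (ν - 1) := by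
    rw [mul_rpow (by positivity) hu.le, ← mul_assoc, mul_comm _ ((4 * π) ^ _), mul_assoc,
      ← rpow_add hu]
    ring_nf
  simp_rw [h_integrand]
  rw [integral_const_mul, integral_cexp_neg_four_pi_sq_mul_norm_sq_add_inner hu,
    ← Complex.ofReal_mul]
  congr 1
  linear_combination rexp (-a * u) * rexp (-‖z‖ ^ 2 / (4 * u)) * h_pow

theorem integral_rpow_neg_add_mul_norm_sq_mul_cexp_inner {a ν : ℝ} (ha : 0 < a) (hν : 0 < ν)
    (z : V) :
    ∫ ξ : V, (((a + 4 * π ^ 2 * ‖ξ‖ ^ 2) ^ (-(ν + finrank ℝ V / 2)) : ℝ) : ℂ) *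
        cexp (2 * π * Complex.I * ⟪z, ξ⟫_ℝ) =
      (((4 * π) ^ (-(finrank ℝ V : ℝ) / 2) * (Gamma (ν + finrank ℝ V / 2))⁻¹ *
        ∫ u in Ioi 0, u ^ (ν - 1) * rexp (-a * u) * rexp (-‖z‖ ^ 2 / (4 * u)) : ℝ) : ℂ) := by
  have hs : 0 < ν + finrank ℝ V / 2 := by positivity
  have h_matern := integrable_rpow_neg_add_mul_norm_sq (μ := (volume : Measure V))
    (s := ν + finrank ℝ V / 2) ha (by positivity : 0 < 4 * π ^ 2) (by linarith)
  rw [integral_rpow_neg_mul_eq_inv_Gamma_mul_integral_Ioi_integral hs (fun ξ => by positivity)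
      (by fun_prop) (by fun_prop) (h_matern.ofReal_mul_cexp_two_pi_I_inner z),
    setIntegral_congr_fun measurableSet_Ioi fun u hu =>
      integral_rpow_mul_exp_neg_mul_mul_cexp_inner a ν hu z,
    integral_complex_ofReal, integral_const_mul]
  push_cast
  ring

end Euclidean

theorem matern_is_gamma_mixture_of_heat_general (n : ℕ) (a ν : ℝ)
    (ha : 0 < a) (hν : 0 < ν) (z : EuclideanSpace ℝ (Fin n)) :
    Integrable (fun ξ : EuclideanSpace ℝ (Fin n) =>
      (((a + 4 * π ^ 2 * ‖ξ‖ ^ 2) ^ (-(ν + n / 2)) : ℝ) : ℂ) *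
        Complex.exp (2 * π * Complex.I *
          ((@inner ℝ (EuclideanSpace ℝ (Fin n)) _ z ξ : ℝ) : ℂ))) ∧
    IntegrableOn (fun u : ℝ =>
      u ^ (ν - 1) * Real.exp (-a * u) * Real.exp (-‖z‖ ^ 2 / (4 * u))) (Set.Ioi 0) ∧
    (∫ ξ : EuclideanSpace ℝ (Fin n),
        (((a + 4 * π ^ 2 * ‖ξ‖ ^ 2) ^ (-(ν + n / 2)) : ℝ) : ℂ) *
          Complex.exp (2 * π * Complex.I *
            ((@inner ℝ (EuclideanSpace ℝ (Fin n)) _ z ξ : ℝ) : ℂ))) =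
      (((4 * π) ^ (-(n : ℝ) / 2) * (Real.Gamma (ν + n / 2))⁻¹ *
        ∫ u in Set.Ioi (0 : ℝ),
          u ^ (ν - 1) * Real.exp (-a * u) * Real.exp (-‖z‖ ^ 2 / (4 * u)) : ℝ) : ℂ) := by
  have h_dim : finrank ℝ (EuclideanSpace ℝ (Fin n)) = n := finrank_euclideanSpace_fin
  have h_matern := integrable_rpow_neg_add_mul_norm_sq (μ := volume) ha
    (by positivity : 0 < 4 * π ^ 2) (s := ν + n / 2) (by rw [h_dim]; linarith)
  have h_mixture := integral_rpow_neg_add_mul_norm_sq_mul_cexp_inner ha hν z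
  rw [h_dim] at h_mixture
  exact ⟨h_matern.ofReal_mul_cexp_two_pi_I_inner z,
    integrableOn_rpow_mul_exp_neg_mul_mul_exp_neg_div hν ha (sq_nonneg ‖z‖), h_mixture⟩

/-- The Euclidean Matérn kernel is a Gamma mixture of heat kernels: for `a, ν > 0` and
`z ∈ ℝⁿ`, the inverse Fourier transform of `(a + 4π²‖ξ‖²)^{-(ν+n/2)}` equals
`(4π)^{-n/2} Γ(ν+n/2)⁻¹ ∫₀^∞ u^{ν-1} e^{-au} e^{-‖z‖²/(4u)} du`; both integrals converge
absolutely. -/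
theorem matern_is_gamma_mixture_of_heat (n : ℕ) (hn : 1 ≤ n) (a ν : ℝ)
    (ha : 0 < a) (hν : 0 < ν) (z : EuclideanSpace ℝ (Fin n)) :
    Integrable (fun ξ : EuclideanSpace ℝ (Fin n) =>
      (((a + 4 * π ^ 2 * ‖ξ‖ ^ 2) ^ (-(ν + n / 2)) : ℝ) : ℂ) *
        Complex.exp (2 * π * Complex.I *
          ((@inner ℝ (EuclideanSpace ℝ (Fin n)) _ z ξ : ℝ) : ℂ))) ∧
    IntegrableOn (fun u : ℝ =>
      u ^ (ν - 1) * Real.exp (-a * u) * Real.exp (-‖z‖ ^ 2 / (4 * u))) (Set.Ioi 0) ∧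
    (∫ ξ : EuclideanSpace ℝ (Fin n),
        (((a + 4 * π ^ 2 * ‖ξ‖ ^ 2) ^ (-(ν + n / 2)) : ℝ) : ℂ) *
          Complex.exp (2 * π * Complex.I *
            ((@inner ℝ (EuclideanSpace ℝ (Fin n)) _ z ξ : ℝ) : ℂ))) =
      (((4 * π) ^ (-(n : ℝ) / 2) * (Real.Gamma (ν + n / 2))⁻¹ *
        ∫ u in Set.Ioi (0 : ℝ),
          u ^ (ν - 1) * Real.exp (-a * u) * Real.exp (-‖z‖ ^ 2 / (4 * u)) : ℝ) : ℂ) :=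
  matern_is_gamma_mixture_of_heat_general n a ν ha hν z
end
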